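/- Suppose M < 0, N > 0, δ₁/K₀ ≤ δ₂ and N < δ₂·√π·|M|·γ₀. Then the transcendental equation G(M,p,y) = y + N·y³ has at least one positive solution ξ. -/

import Mathlib

open Real MeasureTheory Filter Set
open Topology

/-- `g p y = ∫₀^y exp(−r² + p·r·y) dr`. -/
noncomputable def g (p y : ℝ) : ℝ := ∫ r in (0:ℝ)..y, Real.exp (-r^2 + p*r*y)

/-- Complementary error function `erfc z = (2/√π)∫_z^∞ exp(−r²) dr`. -/
noncomputable def erfc (z : ℝ) : ℝ := (2 / Real.sqrt π) * ∫ r in Set.Ioi z, Real.exp (-r^2)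


lemma integrable_gauss : Integrable (fun r : ℝ => Real.exp (-r^2)) := by
  simpa using integrable_exp_neg_mul_sq (one_pos : (0:ℝ) < 1)

lemma integrable_mul_gauss : Integrable (fun x : ℝ => x * Real.exp (-x^2)) := by
  simpa using integrable_mul_exp_neg_mul_sq (one_pos : (0:ℝ) < 1)

lemma sqrt_pi_pos : 0 < Real.sqrt π := Real.sqrt_pos.2 Real.pi_pos

lemma erfc_pos (z : ℝ) : 0 < erfc z := by
  have h1 : 0 < ∫ r in Ioi z, Real.exp (-r^2) := by
    rw [setIntegral_pos_iff_support_of_nonneg_ae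
      (ae_of_all _ fun r => (Real.exp_pos _).le) integrable_gauss.integrableOn]
    have : (Function.support fun r : ℝ => Real.exp (-r^2)) = Set.univ := by
      ext r; simp [Function.support, Real.exp_ne_zero]
    rw [this]
    simp [Real.volume_Ioi]
  exact mul_pos (div_pos two_pos sqrt_pi_pos) h1

lemma erfc_le_one {z : ℝ} (hz : 0 ≤ z) : erfc z ≤ 1 := by
  have h1 : (∫ r in Ioi z, Real.exp (-r^2)) ≤ ∫ r in Ioi (0:ℝ), Real.exp (-r^2) := by
    apply setIntegral_mono_set integrable_gauss.integrableOn
      (ae_of_all _ fun r => (Real.exp_pos _).le)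
    exact HasSubset.Subset.eventuallyLE (Ioi_subset_Ioi hz)
  have h2 : (∫ r in Ioi (0:ℝ), Real.exp (-r^2)) = Real.sqrt π / 2 := by
    have := integral_gaussian_Ioi 1
    simpa using this
  rw [erfc]
  rw [h2] at h1
  rw [div_mul_eq_mul_div, div_le_one sqrt_pi_pos]
  calc 2 * ∫ r in Ioi z, Real.exp (-r^2) ≤ 2 * (Real.sqrt π / 2) := by linarith
    _ = Real.sqrt π := by ring

lemma integral_Ioi_mul_gauss (z : ℝ) :
    ∫ x in Ioi z, x * Real.exp (-x^2) = Real.exp (-z^2) / 2 := by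
  have hderiv : ∀ x ∈ Ioi z, HasDerivAt (fun r : ℝ => -Real.exp (-r^2)/2)
      (x * Real.exp (-x^2)) x := by
    intro x _
    have h := (((hasDerivAt_pow 2 x).neg.exp).neg).div_const 2
    refine h.congr_deriv ?_
    simp
    ring
  have hcont : ContinuousWithinAt (fun r : ℝ => -Real.exp (-r^2)/2) (Ici z) z := by
    apply Continuous.continuousWithinAt; continuity
  have htend : Tendsto (fun r : ℝ => -Real.exp (-r^2)/2) atTop (𝓝 0) := by
    have h1 : Tendsto (fun r : ℝ => -r^2) atTop atBot := by
      apply tendsto_neg_atBot_iff.2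
      exact tendsto_pow_atTop two_ne_zero
    have := (Real.tendsto_exp_atBot.comp h1).neg.div_const 2
    simpa using this
  have hint : IntegrableOn (fun x : ℝ => x * Real.exp (-x^2)) (Ioi z) :=
    integrable_mul_gauss.integrableOn
  have := integral_Ioi_of_hasDerivAt_of_tendsto hcont hderiv hint htend
  rw [this]
  ring

lemma erfc_le {z : ℝ} (hz : 0 < z) : erfc z ≤ Real.exp (-z^2) / (z * Real.sqrt π) := by
  have h1 : (∫ r in Ioi z, Real.exp (-r^2)) ≤ ∫ x in Ioi z, (x * Real.exp (-x^2)) / z := by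
    apply setIntegral_mono_on integrable_gauss.integrableOn
      (integrable_mul_gauss.div_const z).integrableOn measurableSet_Ioi
    intro x hx
    have hx' : z ≤ x := le_of_lt hx
    rw [le_div_iff₀ hz]
    have : 0 < Real.exp (-x^2) := Real.exp_pos _
    nlinarith
  have h2 : (∫ x in Ioi z, (x * Real.exp (-x^2)) / z) = Real.exp (-z^2) / (2*z) := by
    rw [integral_div, integral_Ioi_mul_gauss]
    ring
  rw [erfc]
  rw [h2] at h1
  rw [div_mul_eq_mul_div, div_le_div_iff₀ sqrt_pi_pos (by positivity : (0:ℝ) < z * Real.sqrt π)]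
  have hsp := sqrt_pi_pos
  have key := mul_le_mul_of_nonneg_left h1 (le_of_lt (mul_pos hz hsp))
  have heq : z * Real.sqrt π * (Real.exp (-z^2) / (2*z)) = Real.sqrt π * Real.exp (-z^2) / 2 := by
    field_simp
  rw [heq] at key
  linarith

lemma erfc_cont : Continuous erfc := by
  have hprim : Continuous (fun z : ℝ => ∫ r in (0:ℝ)..z, Real.exp (-r^2)) := by
    apply intervalIntegral.continuous_parametric_intervalIntegral_of_continuous
      (f := fun (_ : ℝ) t => Real.exp (-t^2)) (μ := volume)
    · apply Continuous.rexp; fun_prop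
    · exact continuous_id
  have key : ∀ z : ℝ, erfc z = (2 / Real.sqrt π) *
      ((∫ r : ℝ, Real.exp (-r^2)) - (∫ r in Iic (0:ℝ), Real.exp (-r^2))
        - ∫ r in (0:ℝ)..z, Real.exp (-r^2)) := by
    intro z
    have h1 := intervalIntegral.integral_Iic_add_Ioi (μ := volume) (b := z)
      integrable_gauss.integrableOn integrable_gauss.integrableOn
    have h2 := intervalIntegral.integral_Iic_sub_Iic (μ := volume) (a := (0:ℝ)) (b := z)
      integrable_gauss.integrableOn integrable_gauss.integrableOn
    rw [erfc]
    congr 1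
    linarith
  rw [show erfc = fun z => (2 / Real.sqrt π) *
      ((∫ r : ℝ, Real.exp (-r^2)) - (∫ r in Iic (0:ℝ), Real.exp (-r^2))
        - ∫ r in (0:ℝ)..z, Real.exp (-r^2)) from funext key]
  fun_prop

lemma g_cont (p : ℝ) : Continuous (g p) := by
  apply intervalIntegral.continuous_parametric_intervalIntegral_of_continuous
    (f := fun (y r : ℝ) => Real.exp (-r^2 + p*r*y)) (μ := volume)
  · apply Continuous.rexp; fun_prop
  · exact continuous_id

lemma g_nonneg (p : ℝ) {y : ℝ} (hy : 0 ≤ y) : 0 ≤ g p y :=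
  intervalIntegral.integral_nonneg hy fun r _ => (Real.exp_pos _).le

/-- `G₁(p,y) = exp((p−1)y²)/(K₀ + g(p,y))`. -/
noncomputable def G₁ (K₀ p y : ℝ) : ℝ := Real.exp ((p-1)*y^2) / (K₀ + g p y)

/-- `G₂(y) = exp(−γ₀²y²)/erfc(γ₀y)`. -/
noncomputable def G₂ (γ₀ y : ℝ) : ℝ := Real.exp (-(γ₀^2*y^2)) / erfc (γ₀*y)

/-- `G(M,p,y) = δ₁(1 − (A·M/B)y²)G₁(p,y) − δ₂(1 + M·y²)G₂(y)`. -/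
noncomputable def Gfun (A B δ₁ δ₂ K₀ γ₀ M p y : ℝ) : ℝ :=
  δ₁ * (1 - A*M/B * y^2) * G₁ K₀ p y - δ₂ * (1 + M*y^2) * G₂ γ₀ y

set_option maxHeartbeats 1000000 in
/-- If `M < 0`, `N > 0`, `δ₁/K₀ ≤ δ₂` and `N < δ₂·√π·|M|·γ₀`, then the
transcendental equation has at least one positive solution `ξ`. -/
theorem stmt6 (A B δ₁ δ₂ K₀ γ₀ M N p : ℝ)
    (hA : 0 < A) (hB : 0 < B) (hδ₁ : 0 < δ₁) (hδ₂ : 0 < δ₂)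
    (hK₀ : 0 < K₀) (hγ₀ : 0 < γ₀) (hM : M < 0) (hN : 0 < N)
    (h : δ₁ / K₀ ≤ δ₂) (hN' : N < δ₂ * Real.sqrt π * |M| * γ₀) :
    ∃ ξ : ℝ, 0 < ξ ∧ Gfun A B δ₁ δ₂ K₀ γ₀ M p ξ = ξ + N * ξ^3 := by
  have hMn : (0:ℝ) < -M := by linarith
  have hsp := sqrt_pi_pos
  have hc0 : A*M/B < 0 := div_neg_of_neg_of_pos (mul_neg_of_pos_of_neg hA hM) hB
  rw [abs_of_neg hM] at hN'
  obtain ⟨ε, hε⟩ : ∃ e : ℝ, e = δ₂ * Real.sqrt π * (-M) * γ₀ - N := ⟨_, rfl⟩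
  have hε0 : 0 < ε := by rw [hε]; linarith
  obtain ⟨W, hWdef⟩ : ∃ W : ℝ → ℝ, W = fun y => δ₁/K₀ * ((1 - A*M/B*y^2) * Real.exp ((p-1)*y^2))
      - δ₂ * ((1 + M*y^2) * Real.exp (-(γ₀^2*y^2))) := ⟨_, rfl⟩
  have hW0 : W 0 = δ₁/K₀ - δ₂ := by simp [hWdef]
  have hWd : HasDerivAt W 0 0 := by
    rw [hWdef]
    have h1 : HasDerivAt (fun y : ℝ => (1 - A*M/B*y^2) * Real.exp ((p-1)*y^2)) 0 0 := by
      have ha : HasDerivAt (fun y : ℝ => 1 - A*M/B*y^2) (-(A*M/B*(2*(0:ℝ)^1))) 0 :=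
        ((hasDerivAt_pow 2 (0:ℝ)).const_mul (A*M/B)).const_sub 1
      have hb : HasDerivAt (fun y : ℝ => Real.exp ((p-1)*y^2))
          (Real.exp ((p-1)*(0:ℝ)^2) * ((p-1)*(2*(0:ℝ)^1))) 0 :=
        ((hasDerivAt_pow 2 (0:ℝ)).const_mul (p-1)).exp
      have := ha.mul hb
      refine this.congr_deriv ?_
      norm_num
    have h2 : HasDerivAt (fun y : ℝ => (1 + M*y^2) * Real.exp (-(γ₀^2*y^2))) 0 0 := by
      have ha : HasDerivAt (fun y : ℝ => 1 + M*y^2) (M*(2*(0:ℝ)^1)) 0 := by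
        have := ((hasDerivAt_pow 2 (0:ℝ)).const_mul M).const_add 1
        refine this.congr_deriv ?_
        norm_num
      have hb : HasDerivAt (fun y : ℝ => Real.exp (-(γ₀^2*y^2)))
          (Real.exp (-(γ₀^2*(0:ℝ)^2)) * (-(γ₀^2*(2*(0:ℝ)^1)))) 0 :=
        (((hasDerivAt_pow 2 (0:ℝ)).const_mul (γ₀^2)).neg).exp
      have := ha.mul hb
      refine this.congr_deriv ?_
      norm_num
    have := (h1.const_mul (δ₁/K₀)).sub (h2.const_mul δ₂)
    refine this.congr_deriv ?_
    norm_num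
  -- find small a > 0
  have hslope : ∀ᶠ y in nhdsWithin (0:ℝ) (Set.Ioi 0), slope W 0 y < 1/2 := by
    have ht := hasDerivAt_iff_tendsto_slope.1 hWd
    have := ht.eventually_lt_const (by norm_num : (0:ℝ) < 1/2)
    exact this.filter_mono (nhdsWithin_mono 0 (fun x hx => ne_of_gt hx))
  have hsq : ∀ᶠ y in nhdsWithin (0:ℝ) (Set.Ioi 0), y^2 < 1/(-M) := by
    have ht : Filter.Tendsto (fun y : ℝ => y^2) (nhdsWithin (0:ℝ) (Set.Ioi 0)) (nhds 0) := by
      have h0 : Filter.Tendsto (fun y : ℝ => y^2) (nhds (0:ℝ)) (nhds 0) := by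
        simpa using (continuous_pow 2).tendsto (0:ℝ)
      exact h0.mono_left nhdsWithin_le_nhds
    exact ht.eventually_lt_const (by positivity)
  obtain ⟨a, haslope, hasq, ha0'⟩ :=
    (hslope.and (hsq.and eventually_mem_nhdsWithin)).exists
  have ha0 : 0 < a := ha0'
  have haM : 0 ≤ 1 + M*a^2 := by
    have h' : a^2 * (-M) < 1 := (lt_div_iff₀ hMn).1 hasq
    nlinarith
  have hWa : W a < W 0 + a/2 := by
    rw [slope_def_field] at haslope
    have : (W a - W 0) / a < 1/2 := by simpa using haslope
    rw [div_lt_iff₀ ha0] at this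
    linarith
  -- F a ≤ 0
  have hga := g_nonneg p ha0.le
  have hKg : (0:ℝ) < K₀ + g p a := by linarith
  have hG₁a : G₁ K₀ p a ≤ Real.exp ((p-1)*a^2) / K₀ := by
    rw [G₁]
    apply div_le_div_of_nonneg_left (Real.exp_pos _).le hK₀
    linarith
  have hG₂a : Real.exp (-(γ₀^2*a^2)) ≤ G₂ γ₀ a := by
    rw [G₂, le_div_iff₀ (erfc_pos _)]
    have h1 : erfc (γ₀*a) ≤ 1 := erfc_le_one (by positivity)
    nlinarith [Real.exp_pos (-(γ₀^2*a^2))]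
  have h1ca : (0:ℝ) ≤ 1 - A*M/B*a^2 := by
    have := mul_nonpos_of_nonpos_of_nonneg hc0.le (sq_nonneg a)
    linarith
  have hFa : Gfun A B δ₁ δ₂ K₀ γ₀ M p a - (a + N*a^3) ≤ 0 := by
    have t1 : δ₁ * (1 - A*M/B*a^2) * G₁ K₀ p a
        ≤ δ₁ * (1 - A*M/B*a^2) * (Real.exp ((p-1)*a^2) / K₀) :=
      mul_le_mul_of_nonneg_left hG₁a (mul_nonneg hδ₁.le h1ca)
    have t2 : δ₂ * (1 + M*a^2) * Real.exp (-(γ₀^2*a^2)) ≤ δ₂ * (1 + M*a^2) * G₂ γ₀ a :=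
      mul_le_mul_of_nonneg_left hG₂a (mul_nonneg hδ₂.le haM)
    have hGW : Gfun A B δ₁ δ₂ K₀ γ₀ M p a ≤ W a := by
      have hWa' : W a = δ₁ * (1 - A*M/B*a^2) * (Real.exp ((p-1)*a^2) / K₀)
          - δ₂ * ((1 + M*a^2) * Real.exp (-(γ₀^2*a^2))) := by
        simp only [hWdef]; ring
      rw [Gfun, hWa']
      linarith
    have hNa : 0 < N*a^3 := by positivity
    rw [hW0] at hWa
    linarith
  -- choose b
  obtain ⟨b, hbdef⟩ : ∃ b : ℝ, b = max (a+1) (max (Real.sqrt (1/(-M)) + 1)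
      (Real.sqrt ((1 + δ₂*Real.sqrt π*γ₀)/ε) + 1)) := ⟨_, rfl⟩
  have hab : a ≤ b := by rw [hbdef]; exact le_trans (by linarith) (le_max_left _ _)
  have hb0 : 0 < b := by rw [hbdef]; exact lt_of_lt_of_le (by linarith) (le_max_left _ _)
  have hb1 : 1/(-M) < b^2 := by
    have h1 : Real.sqrt (1/(-M)) < b := by
      rw [hbdef]
      exact lt_of_lt_of_le (by linarith) (le_trans (le_max_left _ _) (le_max_right _ _))
    exact (Real.sqrt_lt' hb0).1 h1
  have hb2 : (1 + δ₂*Real.sqrt π*γ₀)/ε < b^2 := by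
    have h1 : Real.sqrt ((1 + δ₂*Real.sqrt π*γ₀)/ε) < b := by
      rw [hbdef]
      exact lt_of_lt_of_le (by linarith) (le_trans (le_max_right _ _) (le_max_right _ _))
    exact (Real.sqrt_lt' hb0).1 h1
  have hMb : 1 + M*b^2 ≤ 0 := by
    have h' : 1 < b^2 * (-M) := by
      rw [div_lt_iff₀ hMn] at hb1
      linarith
    linarith
  have hG₂b : Real.sqrt π * (γ₀*b) ≤ G₂ γ₀ b := by
    have hzb : 0 < γ₀*b := mul_pos hγ₀ hb0
    have h1 := erfc_le hzb
    rw [G₂, le_div_iff₀ (erfc_pos _)]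
    calc Real.sqrt π * (γ₀*b) * erfc (γ₀*b)
        ≤ Real.sqrt π * (γ₀*b) * (Real.exp (-(γ₀*b)^2) / ((γ₀*b) * Real.sqrt π)) :=
          mul_le_mul_of_nonneg_left h1 (by positivity)
      _ = Real.exp (-(γ₀*b)^2) := by field_simp
      _ = Real.exp (-(γ₀^2*b^2)) := by rw [mul_pow]
  have hgb := g_nonneg p hb0.le
  have hT1 : 0 ≤ δ₁ * (1 - A*M/B*b^2) * G₁ K₀ p b := by
    have hG₁b : 0 ≤ G₁ K₀ p b := by
      rw [G₁]
      apply div_nonneg (Real.exp_pos _).le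
      linarith
    have : (0:ℝ) ≤ 1 - A*M/B*b^2 := by
      have := mul_nonpos_of_nonpos_of_nonneg hc0.le (sq_nonneg b)
      linarith
    exact mul_nonneg (mul_nonneg hδ₁.le this) hG₁b
  have hFb : 0 ≤ Gfun A B δ₁ δ₂ K₀ γ₀ M p b - (b + N*b^3) := by
    have t2 : δ₂ * (-(1 + M*b^2)) * (Real.sqrt π * (γ₀*b)) ≤ δ₂ * (-(1 + M*b^2)) * G₂ γ₀ b :=
      mul_le_mul_of_nonneg_left hG₂b (mul_nonneg hδ₂.le (by linarith))
    have key : 1 + δ₂*Real.sqrt π*γ₀ < ε * b^2 := by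
      rw [div_lt_iff₀ hε0] at hb2
      linarith
    have keyb : (1 + δ₂*Real.sqrt π*γ₀) * b < ε * b^2 * b :=
      mul_lt_mul_of_pos_right key hb0
    rw [hε] at keyb
    rw [Gfun]
    nlinarith [hT1, t2, keyb]
  -- continuity
  have hcont : ContinuousOn (fun y => Gfun A B δ₁ δ₂ K₀ γ₀ M p y - (y + N*y^3))
      (Set.Icc a b) := by
    apply ContinuousOn.sub
    · unfold Gfun G₁ G₂
      apply ContinuousOn.sub
      · apply ContinuousOn.mul
        · fun_prop
        · apply ContinuousOn.div
          · fun_prop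
          · exact (continuous_const.add (g_cont p)).continuousOn
          · intro y hy
            have := g_nonneg p (le_trans ha0.le hy.1)
            intro hcontra
            linarith [hcontra ▸ this]
      · apply ContinuousOn.mul
        · fun_prop
        · apply ContinuousOn.div
          · fun_prop
          · exact (erfc_cont.comp (continuous_const.mul continuous_id)).continuousOn
          · intro y _
            exact (erfc_pos _).ne'
    · fun_prop
  have hmem : (0:ℝ) ∈ Set.Icc (Gfun A B δ₁ δ₂ K₀ γ₀ M p a - (a + N*a^3))
      (Gfun A B δ₁ δ₂ K₀ γ₀ M p b - (b + N*b^3)) := ⟨hFa, hFb⟩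
  obtain ⟨ξ, hξmem, hFξ⟩ := intermediate_value_Icc hab hcont hmem
  refine ⟨ξ, lt_of_lt_of_le ha0 hξmem.1, ?_⟩
  have : Gfun A B δ₁ δ₂ K₀ γ₀ M p ξ - (ξ + N*ξ^3) = 0 := hFξ
  linarith
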